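/- arXiv:0808.1629 — 4 statements merged into one kernel-verified Lean document; each statement's English description precedes it below -/
import Mathlib

section
/- Let p be a prime, let R be a commutative F_p-algebra, let n be a positive integer, and for each ℓ ∈ {1,…,n} let d_ℓ be a positive integer and Q_ℓ ∈ R[x_1,…,x_n] a polynomial. Assume there exist positive rational numbers μ_1,…,μ_n such that for each ℓ ∈ {1,…,n} and for every monomial β·x_1^{v_1}⋯x_n^{v_n} occurring in Q_ℓ with coefficient β ≠ 0 one has μ_ℓ·d_ℓ > Σ_{i=1}^n μ_i·v_i. Then the quotient ring 𝓡 := R[x_1,…,x_n]/(x_1^{d_1} − Q_1, …, x_n^{d_n} − Q_n) is a free R-module of rank Π_{ℓ=1}^n d_ℓ; more precisely, the images in 𝓡 of the monomials x_1^{v_1}⋯x_n^{v_n} with 0 ≤ v_i < d_i for all i form an R-basis of 𝓡. -/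
open MvPolynomial Finsupp Finset

namespace Grob

variable {R : Type*} [CommRing R] {n : ℕ}

/-- integer weight of an exponent vector -/
def W (ν : Fin n → ℕ) (v : Fin n →₀ ℕ) : ℕ := ∑ i, ν i * v i

lemma W_add (ν : Fin n → ℕ) (u v : Fin n →₀ ℕ) : W ν (u + v) = W ν u + W ν v := by
  simp [W, mul_add, Finset.sum_add_distrib]

lemma W_single (ν : Fin n → ℕ) (ℓ : Fin n) (k : ℕ) : W ν (Finsupp.single ℓ k) = ν ℓ * k := by
  simp [W, Finsupp.single_apply, Finset.mul_sum]

lemma W_tsub_add (ν : Fin n → ℕ) {u v : Fin n →₀ ℕ} (h : v ≤ u) :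
    W ν (u - v) + W ν v = W ν u := by
  rw [← W_add, tsub_add_cancel_of_le h]

end Grob

namespace Grob
variable {R : Type*} [CommRing R] {n : ℕ}

/-- normal form of a monomial -/
noncomputable def NF (d : Fin n → ℕ) (Q : Fin n → MvPolynomial (Fin n) R) (ν : Fin n → ℕ)
    (hQ : ∀ ℓ, ∀ w ∈ (Q ℓ).support, W ν w < ν ℓ * d ℓ)
    (v : Fin n →₀ ℕ) : ((i : Fin n) → Fin (d i)) →₀ R :=
  if h : ∀ i, v i < d i then Finsupp.single (fun i => ⟨v i, h i⟩) 1
  else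
    have hex : ∃ i, ¬ v i < d i := not_forall.mp h
    have hℓ : d hex.choose ≤ v hex.choose := le_of_not_gt hex.choose_spec
    have hle : Finsupp.single hex.choose (d hex.choose) ≤ v := by
      rw [Finsupp.single_le_iff]; exact hℓ
    ∑ w ∈ (Q hex.choose).support.attach, MvPolynomial.coeff w.1 (Q hex.choose) •
      NF d Q ν hQ (v - Finsupp.single hex.choose (d hex.choose) + w.1)
termination_by W ν v
decreasing_by
  have h1 := W_tsub_add ν hle
  have h2 := hQ hex.choose w.1 w.2
  rw [W_add]
  rw [W_single] at h1
  omega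

end Grob

namespace Grob
variable {R : Type*} [CommRing R] {n : ℕ}
variable (d : Fin n → ℕ) (Q : Fin n → MvPolynomial (Fin n) R) (ν : Fin n → ℕ)
  (hQ : ∀ ℓ, ∀ w ∈ (Q ℓ).support, W ν w < ν ℓ * d ℓ)

lemma NF_reduced (v : Fin n →₀ ℕ) (h : ∀ i, v i < d i) :
    NF d Q ν hQ v = Finsupp.single (fun i => ⟨v i, h i⟩) 1 := by
  rw [NF, dif_pos h]

lemma NF_conf : ∀ N (u : Fin n →₀ ℕ) (ℓ : Fin n), W ν (u + Finsupp.single ℓ (d ℓ)) ≤ N →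
    NF d Q ν hQ (u + Finsupp.single ℓ (d ℓ)) =
    ∑ w ∈ (Q ℓ).support.attach,
      MvPolynomial.coeff w.1 (Q ℓ) • NF d Q ν hQ (u + w.1) := by
  intro N
  induction N using Nat.strong_induction_on with
  | _ N IH =>
  intro u ℓ hW
  set v := u + Finsupp.single ℓ (d ℓ) with hv
  have hvℓ : v ℓ = u ℓ + d ℓ := by simp [hv]
  have h : ¬ ∀ i, v i < d i := fun hall => absurd (hall ℓ) (by omega)
  rw [NF, dif_neg h]
  set hex : ∃ i, ¬ v i < d i := not_forall.mp h with hhex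
  set m := hex.choose with hm
  have hdm : d m ≤ v m := le_of_not_gt hex.choose_spec
  show (∑ w ∈ (Q m).support.attach, MvPolynomial.coeff w.1 (Q m) •
      NF d Q ν hQ ((v - Finsupp.single m (d m)) + w.1)) = _
  clear hm hhex
  clear_value m hex
  clear hex
  by_cases hcase : m = ℓ
  · subst hcase
    have hvu : v - Finsupp.single m (d m) = u := by
      rw [hv]; exact add_tsub_cancel_right _ _
    rw [hvu]
  · have hvm : v m = u m := by
      simp [hv, Finsupp.single_eq_of_ne' (fun hh => hcase hh.symm)]
    have hum : d m ≤ u m := hvm ▸ hdm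
    set u' := u - Finsupp.single m (d m) with hu'
    have hu : u' + Finsupp.single m (d m) = u :=
      tsub_add_cancel_of_le (Finsupp.single_le_iff.mpr hum)
    have hvsub : v - Finsupp.single m (d m) = u' + Finsupp.single ℓ (d ℓ) := by
      rw [hv, ← hu, add_right_comm]
      exact add_tsub_cancel_right _ _
    have hWv : W ν u' + ν m * d m + ν ℓ * d ℓ = W ν v := by
      rw [hv, ← hu, W_add, W_add, W_single, W_single]
    have LHS : (∑ w ∈ (Q m).support.attach, MvPolynomial.coeff w.1 (Q m) •
        NF d Q ν hQ ((v - Finsupp.single m (d m)) + w.1)) =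
        ∑ w ∈ (Q m).support.attach, MvPolynomial.coeff w.1 (Q m) •
        ∑ x ∈ (Q ℓ).support.attach, MvPolynomial.coeff x.1 (Q ℓ) •
          NF d Q ν hQ ((u' + w.1) + x.1) := by
      refine Finset.sum_congr rfl fun w _ => ?_
      rw [hvsub, add_right_comm]
      congr 1
      refine IH (W ν ((u' + w.1) + Finsupp.single ℓ (d ℓ))) ?_ _ _ le_rfl
      have h2 := hQ m w.1 w.2
      rw [W_add, W_add, W_single]
      omega
    have RHS : (∑ x ∈ (Q ℓ).support.attach, MvPolynomial.coeff x.1 (Q ℓ) •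
        NF d Q ν hQ (u + x.1)) =
        ∑ x ∈ (Q ℓ).support.attach, MvPolynomial.coeff x.1 (Q ℓ) •
        ∑ w ∈ (Q m).support.attach, MvPolynomial.coeff w.1 (Q m) •
          NF d Q ν hQ ((u' + x.1) + w.1) := by
      refine Finset.sum_congr rfl fun x _ => ?_
      rw [← hu, add_right_comm]
      congr 1
      refine IH (W ν ((u' + x.1) + Finsupp.single m (d m))) ?_ _ _ le_rfl
      have h2 := hQ ℓ x.1 x.2
      rw [W_add, W_add, W_single]
      omega
    rw [LHS, RHS]
    simp only [Finset.smul_sum, smul_smul]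
    rw [Finset.sum_comm]
    refine Finset.sum_congr rfl fun x _ => Finset.sum_congr rfl fun w _ => ?_
    rw [mul_comm, add_right_comm]

end Grob

namespace Grob
open MvPolynomial
variable {R : Type*} [CommRing R] {n : ℕ}
variable (d : Fin n → ℕ) (Q : Fin n → MvPolynomial (Fin n) R) (ν : Fin n → ℕ)
  (hQ : ∀ ℓ, ∀ w ∈ (Q ℓ).support, W ν w < ν ℓ * d ℓ)

noncomputable def L : MvPolynomial (Fin n) R →ₗ[R] (((i : Fin n) → Fin (d i)) →₀ R) :=
  (MvPolynomial.basisMonomials (Fin n) R).constr ℕ (NF d Q ν hQ)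

lemma L_monomial (v : Fin n →₀ ℕ) (r : R) :
    L d Q ν hQ (monomial v r) = r • NF d Q ν hQ v := by
  have h1 : (monomial v (r : R)) = r • monomial v 1 := by
    rw [MvPolynomial.smul_monomial, smul_eq_mul, mul_one]
  have h2 := (MvPolynomial.basisMonomials (Fin n) R).constr_basis ℕ (NF d Q ν hQ) v
  have h3 : (MvPolynomial.basisMonomials (Fin n) R) v = monomial v 1 := by
    rw [MvPolynomial.coe_basisMonomials]
  rw [h1, map_smul, L, ← h3, h2]

lemma L_mul_gen (u : Fin n →₀ ℕ) (β : R) (ℓ : Fin n) :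
    L d Q ν hQ (monomial u β * (X ℓ ^ d ℓ - Q ℓ)) = 0 := by
  rw [mul_sub, map_sub, X_pow_eq_monomial, monomial_mul, mul_one]
  have h1 : L d Q ν hQ (monomial (u + Finsupp.single ℓ (d ℓ)) β) =
      β • ∑ w ∈ (Q ℓ).support.attach,
        MvPolynomial.coeff w.1 (Q ℓ) • NF d Q ν hQ (u + w.1) := by
    rw [L_monomial, NF_conf d Q ν hQ (W ν (u + Finsupp.single ℓ (d ℓ))) u ℓ le_rfl]
  have h2 : L d Q ν hQ (monomial u β * Q ℓ) =
      β • ∑ w ∈ (Q ℓ).support.attach,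
        MvPolynomial.coeff w.1 (Q ℓ) • NF d Q ν hQ (u + w.1) := by
    conv_lhs => rw [(Q ℓ).as_sum, ← Finset.sum_attach (Q ℓ).support
      (fun w => monomial w (MvPolynomial.coeff w (Q ℓ)))]
    rw [Finset.mul_sum, map_sum, Finset.smul_sum]
    refine Finset.sum_congr rfl fun w _ => ?_
    rw [monomial_mul, L_monomial, smul_smul]
  rw [h1, h2, sub_self]

lemma L_vanish (f : MvPolynomial (Fin n) R)
    (hf : f ∈ Ideal.span (Set.range fun ℓ : Fin n => X ℓ ^ d ℓ - Q ℓ)) :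
    L d Q ν hQ f = 0 := by
  rw [Ideal.mem_span_range_iff_exists_fun] at hf
  obtain ⟨c, hc⟩ := hf
  rw [← hc, map_sum]
  refine Finset.sum_eq_zero fun ℓ _ => ?_
  conv_lhs => rw [(c ℓ).as_sum, Finset.sum_mul, map_sum]
  exact Finset.sum_eq_zero fun u _ => L_mul_gen d Q ν hQ u _ ℓ

end Grob

open MvPolynomial in
/-- **Gröbner-basis lemma** (Lemma `GrobLem` of Nicole–Vasiu–Wedhorn, *Purity of level m
stratifications*): let `p` be a prime, `R` a commutative `𝔽_p`-algebra, `n ≥ 1`, and for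
each `ℓ` let `d ℓ ≥ 1` and `Q ℓ ∈ R[x_1,…,x_n]`.  If there are positive rational weights
`μ i` such that every monomial `β·x^v` occurring in `Q ℓ` satisfies
`Σ_i μ i * v i < μ ℓ * d ℓ`, then
`𝓡 = R[x_1,…,x_n]/(x_1^{d_1} - Q_1, …, x_n^{d_n} - Q_n)` is a free `R`-module of rank
`Π_ℓ d ℓ`, with basis given by the images of the monomials `x^v` with `0 ≤ v i < d i`. -/
theorem statement_0 (p : ℕ) (hp : p.Prime) (R : Type*) [CommRing R] [Algebra (ZMod p) R]
    (n : ℕ) (hn : 0 < n) (d : Fin n → ℕ) (hd : ∀ ℓ, 0 < d ℓ)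
    (Q : Fin n → MvPolynomial (Fin n) R) (μ : Fin n → ℚ) (hμ : ∀ i, 0 < μ i)
    (hweight : ∀ ℓ : Fin n, ∀ v ∈ (Q ℓ).support,
      (∑ i : Fin n, μ i * (v i : ℚ)) < μ ℓ * (d ℓ : ℚ)) :
    ∃ B : Module.Basis ((i : Fin n) → Fin (d i)) R
        (MvPolynomial (Fin n) R ⧸
          Ideal.span (Set.range fun ℓ : Fin n => MvPolynomial.X ℓ ^ d ℓ - Q ℓ)),
      ∀ v : (i : Fin n) → Fin (d i),
        B v = Ideal.Quotient.mk
          (Ideal.span (Set.range fun ℓ : Fin n => MvPolynomial.X ℓ ^ d ℓ - Q ℓ))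
          (∏ i : Fin n, MvPolynomial.X i ^ (v i : ℕ)) := by
  classical
  set I : Ideal (MvPolynomial (Fin n) R) :=
    Ideal.span (Set.range fun ℓ : Fin n => MvPolynomial.X ℓ ^ d ℓ - Q ℓ) with hI
  -- integer weights
  obtain ⟨ν, hQν⟩ : ∃ ν : Fin n → ℕ, ∀ ℓ, ∀ w ∈ (Q ℓ).support, Grob.W ν w < ν ℓ * d ℓ := by
    set D : ℕ := ∏ i, (μ i).den with hD
    have hDpos : 0 < D := Finset.prod_pos fun i _ => (μ i).pos
    refine ⟨fun i => (μ i * D).num.toNat, ?_⟩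
    have hcast : ∀ i, (((μ i * D).num.toNat : ℕ) : ℚ) = μ i * D := by
      intro i
      obtain ⟨k, hk⟩ : ((μ i).den : ℕ) ∣ D := Finset.dvd_prod_of_mem _ (Finset.mem_univ i)
      have hint : (μ i) * (D : ℚ) = (((μ i).num * k : ℤ) : ℚ) := by
        rw [hk]; push_cast; rw [← mul_assoc, Rat.mul_den_eq_num]
      have hnum : (μ i * D).num = (μ i).num * k := by rw [hint, Rat.num_intCast]
      have hpos : 0 ≤ (μ i * D).num := Rat.num_nonneg.mpr (le_of_lt (mul_pos (hμ i) (by exact_mod_cast hDpos)))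
      rw [show (((μ i * D).num.toNat : ℕ) : ℚ) = (((μ i * D).num.toNat : ℤ) : ℚ) by push_cast; ring,
        Int.toNat_of_nonneg hpos, hnum, ← hint]
    intro ℓ w hw
    have h1 := hweight ℓ w hw
    have h2 : ((Grob.W (fun i => (μ i * D).num.toNat) w : ℕ) : ℚ) <
        (((fun i => (μ i * D).num.toNat) ℓ * d ℓ : ℕ) : ℚ) := by
      rw [Grob.W]
      push_cast
      simp only [hcast]
      calc ∑ i, μ i * D * (w i : ℚ) = (∑ i, μ i * (w i : ℚ)) * D := by
            rw [Finset.sum_mul]; congr 1; ext i; ring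
        _ < (μ ℓ * d ℓ) * D := by
            exact mul_lt_mul_of_pos_right h1 (by exact_mod_cast hDpos)
        _ = μ ℓ * D * (d ℓ : ℚ) := by ring
    exact_mod_cast h2
  -- the candidate basis vectors
  set e : ((i : Fin n) → Fin (d i)) → (Fin n →₀ ℕ) :=
    fun v => Finsupp.equivFunOnFinite.symm fun i => (v i : ℕ) with he
  have he_apply : ∀ v i, e v i = (v i : ℕ) := fun v i => rfl
  set b : ((i : Fin n) → Fin (d i)) → (MvPolynomial (Fin n) R ⧸ I) :=
    fun v => Ideal.Quotient.mk I (∏ i : Fin n, MvPolynomial.X i ^ (v i : ℕ)) with hb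
  have hmono : ∀ v, (∏ i : Fin n, (MvPolynomial.X i : MvPolynomial (Fin n) R) ^ (v i : ℕ))
      = monomial (e v) 1 := by
    intro v
    rw [← prod_X_pow_eq_monomial]
    have h2 : ∀ x ∈ Finset.univ, x ∉ (e v).support →
        (MvPolynomial.X x : MvPolynomial (Fin n) R) ^ (e v x) = 1 := fun x _ hx => by
      rw [Finsupp.notMem_support_iff.mp hx, pow_zero]
    exact (Finset.prod_subset (Finset.subset_univ _) h2).symm
  have hsmul : ∀ (r : R) (f : MvPolynomial (Fin n) R),
      Ideal.Quotient.mk I (r • f) = r • Ideal.Quotient.mk I f := fun r f => by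
    exact map_smul (Ideal.Quotient.mkₐ R I) r f
  -- span
  have Sp : ∀ N (w : Fin n →₀ ℕ), Grob.W ν w ≤ N →
      Ideal.Quotient.mk I (monomial w (1 : R)) ∈ Submodule.span R (Set.range b) := by
    intro N
    induction N using Nat.strong_induction_on with
    | _ N IH =>
    intro w hW
    by_cases hred : ∀ i, w i < d i
    · have hv : e (fun i => ⟨w i, hred i⟩) = w := by
        ext i
        rfl
      have hm := hmono (fun i => ⟨w i, hred i⟩)
      rw [hv] at hm
      exact Submodule.subset_span ⟨fun i => ⟨w i, hred i⟩,
        congrArg (Ideal.Quotient.mk I) hm⟩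
    · push_neg at hred
      obtain ⟨ℓ, hℓ⟩ := hred
      set u := w - Finsupp.single ℓ (d ℓ) with hu
      have hwu : u + Finsupp.single ℓ (d ℓ) = w :=
        tsub_add_cancel_of_le (Finsupp.single_le_iff.mpr hℓ)
      have key : Ideal.Quotient.mk I (monomial w (1 : R)) =
          Ideal.Quotient.mk I (monomial u 1 * Q ℓ) := by
        rw [Ideal.Quotient.mk_eq_mk_iff_sub_mem]
        have hdiff : monomial w (1 : R) - monomial u 1 * Q ℓ =
            monomial u 1 * (MvPolynomial.X ℓ ^ d ℓ - Q ℓ) := by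
          rw [mul_sub, X_pow_eq_monomial, monomial_mul, one_mul, hwu]
        rw [hdiff]
        exact Ideal.mul_mem_left _ _ (Ideal.subset_span ⟨ℓ, rfl⟩)
      rw [key]
      have hexp : monomial u (1 : R) * Q ℓ = ∑ x ∈ (Q ℓ).support.attach,
          monomial (u + x.1) (MvPolynomial.coeff x.1 (Q ℓ)) := by
        conv_lhs => rw [(Q ℓ).as_sum, ← Finset.sum_attach (Q ℓ).support
          (fun x => monomial x (MvPolynomial.coeff x (Q ℓ)))]
        rw [Finset.mul_sum]
        exact Finset.sum_congr rfl fun x _ => by rw [monomial_mul, one_mul]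
      rw [hexp, map_sum]
      refine Submodule.sum_mem _ fun x _ => ?_
      have h1 : (monomial (u + x.1) (MvPolynomial.coeff x.1 (Q ℓ)) : MvPolynomial (Fin n) R)
          = MvPolynomial.coeff x.1 (Q ℓ) • monomial (u + x.1) 1 := by
        rw [MvPolynomial.smul_monomial, smul_eq_mul, mul_one]
      rw [h1, hsmul]
      refine Submodule.smul_mem _ _ (IH (Grob.W ν (u + x.1)) ?_ _ le_rfl)
      have h2 := hQν ℓ x.1 x.2
      have h3 : Grob.W ν u + ν ℓ * d ℓ = Grob.W ν w := by
        rw [← hwu, Grob.W_add, Grob.W_single]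
      rw [Grob.W_add]
      omega
  -- linear independence
  have li : LinearIndependent R b := by
    rw [Fintype.linearIndependent_iff]
    intro g hg v0
    have hP : Ideal.Quotient.mk I (∑ v, g v • monomial (e v) (1 : R)) = 0 := by
      rw [map_sum, ← hg]
      refine Finset.sum_congr rfl fun v _ => ?_
      rw [hsmul]
      simp only [hb]
      rw [hmono v]
    have hmem : (∑ v, g v • monomial (e v) (1 : R)) ∈ I :=
      Ideal.Quotient.eq_zero_iff_mem.mp hP
    have h0 := Grob.L_vanish d Q ν hQν _ (hI ▸ hmem)
    rw [map_sum] at h0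
    have h1 : ∀ v, Grob.L d Q ν hQν (g v • monomial (e v) (1 : R)) =
        g v • Finsupp.single v (1 : R) := by
      intro v
      rw [map_smul, Grob.L_monomial, one_smul,
        Grob.NF_reduced d Q ν hQν (e v) (fun i => (v i).2)]
      congr 1
    rw [Finset.sum_congr rfl fun v _ => h1 v] at h0
    have h2 := congrArg (fun F => F v0) h0
    simpa [Finsupp.single_apply, Finset.sum_apply', Finset.sum_ite_eq'] using h2
  have hspan : ⊤ ≤ Submodule.span R (Set.range b) := by
    intro x _
    obtain ⟨f, rfl⟩ := Ideal.Quotient.mk_surjective x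
    rw [f.as_sum, map_sum]
    refine Submodule.sum_mem _ fun w _ => ?_
    have h1 : (monomial w (MvPolynomial.coeff w f) : MvPolynomial (Fin n) R)
        = MvPolynomial.coeff w f • monomial w 1 := by
      rw [MvPolynomial.smul_monomial, smul_eq_mul, mul_one]
    rw [h1, hsmul]
    exact Submodule.smul_mem _ _ (Sp (Grob.W ν w) w le_rfl)
  exact ⟨Module.Basis.mk li hspan, fun v => Module.Basis.mk_apply li hspan v⟩
end

section
/- With the combinatorial setup below, if the pairs (i,j) and (j,l) both belong to J₀,₀, then (i,l) ∈ J₀,₀; moreover η(i,l) = min(η(i,j), η(j,l)) and ν(i,l) = min(ν(i,j), ν(j,l)). -/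
namespace PaperPurity

variable {r : ℕ}

/-- `J₊ = {(i,j) : j ≤ c < i}` (translated to 0-based indexing on `Fin r`). -/
def Jp (c : ℕ) : Set (Fin r × Fin r) := {q | q.2.val < c ∧ c ≤ q.1.val}

/-- `J₀ = {(i,j) : i,j ≤ c or i,j > c}` (0-based). -/
def Jz (c : ℕ) : Set (Fin r × Fin r) :=
  {q | (q.1.val < c ∧ q.2.val < c) ∨ (c ≤ q.1.val ∧ c ≤ q.2.val)}

/-- `J₋ = {(i,j) : i ≤ c < j}` (0-based). -/
def Jm (c : ℕ) : Set (Fin r × Fin r) := {q | q.1.val < c ∧ c ≤ q.2.val}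

/-- Apply `π^s` to both entries of a pair. -/
def iter (π : Equiv.Perm (Fin r)) (s : ℕ) (q : Fin r × Fin r) : Fin r × Fin r :=
  ((π ^ s) q.1, (π ^ s) q.2)

/-- The π-order `ν(i,j)`: the smallest positive `ν` with `(π^ν i, π^ν j) ∈ J₊ ∪ J₋`.
On `J₀,₀` this `sInf` also computes the extended π-order `ν(i,j) - s`. -/
noncomputable def nu (π : Equiv.Perm (Fin r)) (c : ℕ) (q : Fin r × Fin r) : ℕ :=
  sInf {ν : ℕ | 0 < ν ∧ iter π ν q ∈ Jp c ∪ Jm c}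

/-- `J₋,₁`. -/
def Jm1 (π : Equiv.Perm (Fin r)) (c : ℕ) : Set (Fin r × Fin r) :=
  {q | q ∈ Jm c ∧ iter π (nu π c q) q ∈ Jp c}

/-- `J₊,₁`. -/
def Jp1 (π : Equiv.Perm (Fin r)) (c : ℕ) : Set (Fin r × Fin r) :=
  {q' | ∃ q ∈ Jm1 π c, q' = iter π (nu π c q) q}

/-- `J₊,₂ = J₊ \ J₊,₁`. -/
def Jp2 (π : Equiv.Perm (Fin r)) (c : ℕ) : Set (Fin r × Fin r) := Jp c \ Jp1 π c

/-- `J₀,₀`. -/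
def Jz0 (π : Equiv.Perm (Fin r)) (c : ℕ) : Set (Fin r × Fin r) :=
  {q' | ∃ q ∈ Jm1 π c, ∃ s : ℕ, 1 ≤ s ∧ s ≤ nu π c q - 1 ∧ q' = iter π s q}

/-- The π-level `η`. -/
noncomputable def eta (π : Equiv.Perm (Fin r)) (c : ℕ) (q' : Fin r × Fin r) : ℕ :=
  sInf {s : ℕ | ∃ q ∈ Jm1 π c, s ≤ nu π c q ∧ q' = iter π s q}

/-- Membership in `Γ` for the tuple `(γ 1, …, γ s)`. -/
def inGamma (π : Equiv.Perm (Fin r)) (c s : ℕ) (γ : ℕ → Fin r) : Prop :=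
  2 ≤ s ∧ (∀ ℓ : ℕ, 1 ≤ ℓ → ℓ ≤ s - 2 → (γ ℓ, γ (ℓ + 1)) ∈ Jz0 π c) ∧
    (γ (s - 1), γ s) ∈ Jp2 π c

/-- Membership in `Δ` for the tuple `(γ 1, …, γ s)`. -/
def inDelta (π : Equiv.Perm (Fin r)) (c s : ℕ) (γ : ℕ → Fin r) : Prop :=
  3 ≤ s ∧ inGamma π c (s - 1) γ ∧ (γ (s - 1), γ s) ∈ Jz0 π c

/-- `n_t(γ)`. -/
noncomputable def nCount (π : Equiv.Perm (Fin r)) (c s : ℕ) (γ : ℕ → Fin r) (t : ℕ) : ℕ :=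
  Set.ncard {ℓ : ℕ | 1 ≤ ℓ ∧ ℓ ≤ s - 1 ∧ (γ ℓ, γ (ℓ + 1)) ∈ Jz0 π c ∧
    nu π c (γ ℓ, γ (ℓ + 1)) = t}

/-- `κ(γ) = Σ_{t ≥ 1} n_t(γ) p^{-t} ∈ ℚ`. -/
noncomputable def kappa (p : ℕ) (π : Equiv.Perm (Fin r)) (c s : ℕ) (γ : ℕ → Fin r) : ℚ :=
  ∑ᶠ t : ℕ, if 1 ≤ t then (nCount π c s γ t : ℚ) / (p : ℚ) ^ t else 0

/-- Membership in `Γ₁`. -/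
def inGamma1 (π : Equiv.Perm (Fin r)) (c s : ℕ) (γ : ℕ → Fin r) : Prop :=
  inGamma π c s γ ∧ (γ 1, γ s) ∈ Jp1 π c ∧ (γ 2, γ s) ∉ Jp1 π c

/-- Membership in `Δ₁`. -/
def inDelta1 (π : Equiv.Perm (Fin r)) (c s : ℕ) (γ : ℕ → Fin r) : Prop :=
  inDelta π c s γ ∧ (γ 1, γ s) ∈ Jp1 π c ∧ (γ 2, γ s) ∉ Jp1 π c

/-- `κ(π) = max {κ(γ) : γ ∈ Γ₁ ∪ Δ₁}` (and `0` if `Γ₁ ∪ Δ₁ = ∅`); realized as a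
supremum in `ℝ` of the (finite) set of values together with `0`. -/
noncomputable def kappaPerm (p : ℕ) (π : Equiv.Perm (Fin r)) (c : ℕ) : ℝ :=
  sSup (insert (0 : ℝ) {x : ℝ | ∃ (s : ℕ) (γ : ℕ → Fin r),
    (inGamma1 π c s γ ∨ inDelta1 π c s γ) ∧ x = ((kappa p π c s γ : ℚ) : ℝ)})

/-- The `k`-span of the matrix units `E_{i,j}`, `(i,j) ∈ S`. -/
def spanUnits (k : Type*) [Field k] {r : ℕ} (S : Set (Fin r × Fin r)) :
    Submodule k (Matrix (Fin r) (Fin r) k) :=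
  Submodule.span k ((fun q : Fin r × Fin r => Matrix.single q.1 q.2 (1 : k)) '' S)


section Helpers

variable (π : Equiv.Perm (Fin r)) (c : ℕ)

lemma pow_apply_pow (m n : ℕ) (x : Fin r) : (π ^ m) ((π ^ n) x) = (π ^ (m + n)) x := by
  rw [pow_add, Equiv.Perm.mul_apply]

lemma iter_iter (s t : ℕ) (q : Fin r × Fin r) :
    iter π t (iter π s q) = iter π (t + s) q := by
  simp [iter, pow_apply_pow]

lemma iter_zero (q : Fin r × Fin r) : iter π 0 q = q := by simp [iter]

lemma notin_union_iff (q : Fin r × Fin r) :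
    q ∉ Jp c ∪ Jm c ↔ (c ≤ q.1.val ↔ c ≤ q.2.val) := by
  simp only [Jp, Jm, Set.mem_union, Set.mem_setOf_eq, not_or]
  omega

lemma not_Jp_Jm {q : Fin r × Fin r} (h1 : q ∈ Jp c) (h2 : q ∈ Jm c) : False := by
  simp only [Jp, Jm, Set.mem_setOf_eq] at h1 h2
  omega

lemma iter_injective (s : ℕ) : Function.Injective (iter π s) := by
  intro q q' h
  simp only [iter, Prod.ext_iff, EmbeddingLike.apply_eq_iff_eq] at h
  exact Prod.ext h.1 h.2

lemma nu_eq (q : Fin r × Fin r) (n : ℕ) (hn : 0 < n)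
    (h1 : iter π n q ∈ Jp c ∪ Jm c)
    (h2 : ∀ t, 0 < t → t < n → iter π t q ∉ Jp c ∪ Jm c) :
    nu π c q = n := by
  have hmem : n ∈ {ν : ℕ | 0 < ν ∧ iter π ν q ∈ Jp c ∪ Jm c} := ⟨hn, h1⟩
  refine le_antisymm (Nat.sInf_le hmem) ?_
  by_contra h
  push_neg at h
  have hm := Nat.sInf_mem (⟨n, hmem⟩ : Set.Nonempty _)
  exact h2 _ hm.1 h hm.2

lemma nu_pos_of_Jm1 {q : Fin r × Fin r} (hq : q ∈ Jm1 π c) : 0 < nu π c q := by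
  rcases Nat.eq_zero_or_pos (nu π c q) with h | h
  · exfalso
    have h2 := hq.2
    rw [h, iter_zero] at h2
    exact not_Jp_Jm c h2 hq.1
  · exact h

lemma nu_min_of_Jm1 {q : Fin r × Fin r} (_ : q ∈ Jm1 π c) {t : ℕ}
    (ht0 : 0 < t) (ht : t < nu π c q) : iter π t q ∉ Jp c ∪ Jm c :=
  fun h => Nat.notMem_of_lt_sInf ht ⟨ht0, h⟩

lemma nu_shift {q : Fin r × Fin r} (hq : q ∈ Jm1 π c) {s : ℕ} (hs : s < nu π c q) :
    nu π c (iter π s q) = nu π c q - s := by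
  apply nu_eq
  · omega
  · rw [iter_iter]
    have h : nu π c q - s + s = nu π c q := by omega
    rw [h]
    exact Set.mem_union_left _ hq.2
  · intro t ht0 htn
    rw [iter_iter]
    exact nu_min_of_Jm1 π c hq (by omega) (by omega)

lemma rep_unique {q q' : Fin r × Fin r} (hq : q ∈ Jm1 π c) (hq' : q' ∈ Jm1 π c)
    {s s' : ℕ} (hs : 1 ≤ s) (hs2 : s ≤ nu π c q - 1) (hs' : s' ≤ nu π c q')
    (heq : iter π s q = iter π s' q') : s' = s := by
  have hn : 0 < nu π c q := nu_pos_of_Jm1 π c hq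
  rcases lt_trichotomy s' s with h | h | h
  · exfalso
    have hq'eq : iter π (s - s') q = q' := by
      apply iter_injective π s'
      rw [iter_iter]
      have : s' + (s - s') = s := by omega
      rw [this, heq]
    have hnot := nu_min_of_Jm1 π c hq (t := s - s') (by omega) (by omega)
    rw [hq'eq] at hnot
    exact hnot (Set.mem_union_right _ hq'.1)
  · exact h
  · exfalso
    have hqeq : iter π (s' - s) q' = q := by
      apply iter_injective π s
      rw [iter_iter]
      have : s + (s' - s) = s' := by omega
      rw [this, heq]
    rcases lt_or_eq_of_le (Nat.sub_le_of_le_add (by omega : s' ≤ nu π c q' + s)) with h2 | h2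
    · have hnot := nu_min_of_Jm1 π c hq' (t := s' - s) (by omega) h2
      rw [hqeq] at hnot
      exact hnot (Set.mem_union_right _ hq.1)
    · have hp := hq'.2
      rw [← h2, hqeq] at hp
      exact not_Jp_Jm c hp hq.1

lemma eta_shift {q : Fin r × Fin r} (hq : q ∈ Jm1 π c) {s : ℕ} (hs : 1 ≤ s)
    (hs2 : s ≤ nu π c q - 1) : eta π c (iter π s q) = s := by
  have hmem : s ∈ {s' | ∃ q' ∈ Jm1 π c, s' ≤ nu π c q' ∧ iter π s q = iter π s' q'} :=
    ⟨q, hq, by have := nu_pos_of_Jm1 π c hq; omega, rfl⟩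
  have hne : Set.Nonempty {s' | ∃ q' ∈ Jm1 π c, s' ≤ nu π c q' ∧ iter π s q = iter π s' q'} :=
    ⟨s, hmem⟩
  have hm := Nat.sInf_mem hne
  obtain ⟨q', hq', hle, heq⟩ := hm
  exact rep_unique π c hq hq' hs hs2 hle heq

end Helpers

theorem statement_1 (c d : ℕ) (hc : 0 < c) (hd : 0 < d)
    (π : Equiv.Perm (Fin (c + d))) (i j l : Fin (c + d))
    (hij : (i, j) ∈ Jz0 π c) (hjl : (j, l) ∈ Jz0 π c) :
    (i, l) ∈ Jz0 π c ∧
      eta π c (i, l) = min (eta π c (i, j)) (eta π c (j, l)) ∧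
      nu π c (i, l) = min (nu π c (i, j)) (nu π c (j, l)) := by
  obtain ⟨q₁, hq₁, a, ha1, ha2, hija⟩ := hij
  obtain ⟨q₂, hq₂, b, hb1, hb2, hjlb⟩ := hjl
  set n₁ := nu π c q₁ with hn₁def
  set n₂ := nu π c q₂ with hn₂def
  have hn₁pos : 0 < n₁ := nu_pos_of_Jm1 π c hq₁
  have hn₂pos : 0 < n₂ := nu_pos_of_Jm1 π c hq₂
  have ha2' : a ≤ n₁ - 1 := ha2
  have hb2' : b ≤ n₂ - 1 := hb2
  -- extract coordinates
  rw [Prod.ext_iff] at hija hjlb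
  obtain ⟨hi, hj⟩ := hija
  obtain ⟨hj', hl⟩ := hjlb
  simp only [iter] at hi hj hj' hl
  have hlink : (π ^ a) q₁.2 = (π ^ b) q₂.1 := by rw [← hj, ← hj']
  set s' := min a b with hs'def
  set t' := min (n₁ - a) (n₂ - b) with ht'def
  have hs'1 : 1 ≤ s' := by omega
  have ht'1 : 1 ≤ t' := by omega
  -- the link, shifted
  have hlink' : ∀ u : ℕ, (π ^ (a - s' + u)) q₁.2 = (π ^ (b - s' + u)) q₂.1 := by
    intro u
    apply (π ^ s').injective
    rw [pow_apply_pow, pow_apply_pow]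
    have e1 : s' + (a - s' + u) = u + a := by omega
    have e2 : s' + (b - s' + u) = u + b := by omega
    rw [e1, e2, ← pow_apply_pow π u a, ← pow_apply_pow π u b, hlink]
  -- side facts for the two chains
  have H1a : q₁.1.val < c ∧ c ≤ q₁.2.val := hq₁.1
  have H2a : q₂.1.val < c ∧ c ≤ q₂.2.val := hq₂.1
  have H1b : ((π ^ n₁) q₁.2).val < c ∧ c ≤ ((π ^ n₁) q₁.1).val := hq₁.2
  have H2b : ((π ^ n₂) q₂.2).val < c ∧ c ≤ ((π ^ n₂) q₂.1).val := hq₂.2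
  have H1 : ∀ e, 0 < e → e < n₁ →
      (c ≤ ((π ^ e) q₁.1).val ↔ c ≤ ((π ^ e) q₁.2).val) := by
    intro e he0 he
    have := (notin_union_iff c (iter π e q₁)).mp (nu_min_of_Jm1 π c hq₁ he0 he)
    simpa [iter] using this
  have H2 : ∀ e, 0 < e → e < n₂ →
      (c ≤ ((π ^ e) q₂.1).val ↔ c ≤ ((π ^ e) q₂.2).val) := by
    intro e he0 he
    have := (notin_union_iff c (iter π e q₂)).mp (nu_min_of_Jm1 π c hq₂ he0 he)
    simpa [iter] using this
  -- the new base pair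
  set Q : Fin (c + d) × Fin (c + d) := ((π ^ (a - s')) q₁.1, (π ^ (b - s')) q₂.2) with hQdef
  have hQiter : ∀ u : ℕ, iter π u Q = ((π ^ (a - s' + u)) q₁.1, (π ^ (b - s' + u)) q₂.2) := by
    intro u
    simp only [iter, hQdef, pow_apply_pow]
    rw [Nat.add_comm u (a - s'), Nat.add_comm u (b - s')]
  -- G1 : Q ∈ Jm
  have G1 : Q.1.val < c ∧ c ≤ Q.2.val := by
    constructor
    · rcases Nat.le_total a b with hab | hab
      · have : a - s' = 0 := by omega
        rw [hQdef]
        simp only [this, pow_zero, Equiv.Perm.one_apply]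
        exact H1a.1
      · rcases Nat.eq_or_lt_of_le hab with heq | hlt
        · have : a - s' = 0 := by omega
          rw [hQdef]
          simp only [this, pow_zero, Equiv.Perm.one_apply]
          exact H1a.1
        · -- b < a, s' = b
          have he : a - s' = a - b := by omega
          have hb0 : b - s' = 0 := by omega
          have h1 := H1 (a - b) (by omega) (by omega)
          have h2 := hlink' 0
          rw [Nat.add_zero, Nat.add_zero, he, hb0, pow_zero, Equiv.Perm.one_apply] at h2
          have h3 : ¬ c ≤ ((π ^ (a - b)) q₁.2).val := by rw [h2]; omega
          show ((π ^ (a - s')) q₁.1).val < c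
          rw [he]
          omega
    · rcases Nat.lt_or_ge a b with hlt | hab
      · -- a < b, s' = a
        have he : b - s' = b - a := by omega
        have h2 := hlink' 0
        rw [Nat.add_zero, Nat.add_zero] at h2
        have ha0 : a - s' = 0 := by omega
        rw [ha0, pow_zero, Equiv.Perm.one_apply, he] at h2
        have h1 := H2 (b - a) (by omega) (by omega)
        have h3 : c ≤ ((π ^ (b - a)) q₂.1).val := by rw [← h2]; exact H1a.2
        show c ≤ ((π ^ (b - s')) q₂.2).val
        rw [he]
        omega
      · have : b - s' = 0 := by omega
        rw [hQdef]
        simp only [this, pow_zero, Equiv.Perm.one_apply]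
        exact H2a.2
  -- G2 : intermediate iterates of Q are in neither Jp nor Jm
  have G2 : ∀ u, 0 < u → u < s' + t' →
      (c ≤ ((π ^ (a - s' + u)) q₁.1).val ↔ c ≤ ((π ^ (b - s' + u)) q₂.2).val) := by
    intro u hu0 hu
    have e10 : 0 < a - s' + u := by omega
    have e11 : a - s' + u < n₁ := by omega
    have e20 : 0 < b - s' + u := by omega
    have e21 : b - s' + u < n₂ := by omega
    rw [H1 _ e10 e11, hlink' u, H2 _ e20 e21]
  -- G3 : the (s'+t')-th iterate of Q is in Jp
  have G3 : ((π ^ (b - s' + (s' + t'))) q₂.2).val < c ∧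
      c ≤ ((π ^ (a - s' + (s' + t'))) q₁.1).val := by
    have ea : a - s' + (s' + t') = a + t' := by omega
    have eb : b - s' + (s' + t') = b + t' := by omega
    rw [ea, eb]
    have hlk : (π ^ (a + t')) q₁.2 = (π ^ (b + t')) q₂.1 := by
      have := hlink' (s' + t')
      rwa [show a - s' + (s' + t') = a + t' from by omega,
        show b - s' + (s' + t') = b + t' from by omega] at this
    rcases Nat.le_total (n₁ - a) (n₂ - b) with hc1 | hc1
    · -- t' = n₁ - a
      have ha' : a + t' = n₁ := by omega
      constructor
      · rcases Nat.eq_or_lt_of_le hc1 with heq | hlt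
        · have hb' : b + t' = n₂ := by omega
          rw [hb']
          exact H2b.1
        · have h1 := H2 (b + t') (by omega) (by omega)
          have : ¬ c ≤ ((π ^ (b + t')) q₂.1).val := by
            rw [← hlk, ha']
            omega
          omega
      · rw [ha']
        exact H1b.2
    · -- t' = n₂ - b ≤ n₁ - a
      have hb' : b + t' = n₂ := by omega
      constructor
      · rw [hb']
        exact H2b.1
      · rcases Nat.eq_or_lt_of_le hc1 with heq | hlt
        · have ha' : a + t' = n₁ := by omega
          rw [ha']
          exact H1b.2
        · have h1 := H1 (a + t') (by omega) (by omega)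
          have : c ≤ ((π ^ (a + t')) q₁.2).val := by
            rw [hlk, hb']
            exact H2b.2
          omega
  -- assemble: Q ∈ Jm1, nu Q = s' + t'
  have hQJm : Q ∈ Jm c := G1
  have hnuQ : nu π c Q = s' + t' := by
    apply nu_eq
    · omega
    · rw [hQiter]
      exact Set.mem_union_left _ ⟨G3.1, G3.2⟩
    · intro t ht0 htn
      rw [hQiter, notin_union_iff]
      exact G2 t ht0 htn
  have hQJm1 : Q ∈ Jm1 π c := by
    refine ⟨hQJm, ?_⟩
    rw [hnuQ, hQiter]
    exact ⟨G3.1, G3.2⟩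
  have hil : (i, l) = iter π s' Q := by
    rw [hQiter]
    have ea : a - s' + s' = a := by omega
    have eb : b - s' + s' = b := by omega
    rw [ea, eb, Prod.ext_iff]
    exact ⟨hi, hl⟩
  have hs'le : s' ≤ nu π c Q - 1 := by omega
  refine ⟨⟨Q, hQJm1, s', hs'1, hs'le, hil⟩, ?_, ?_⟩
  · -- eta
    have e1 : eta π c (i, l) = s' := by rw [hil]; exact eta_shift π c hQJm1 hs'1 hs'le
    have e2 : eta π c (i, j) = a := by
      have h : (i, j) = iter π a q₁ := by
        rw [Prod.ext_iff]
        exact ⟨hi, hj⟩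
      rw [h]; exact eta_shift π c hq₁ ha1 ha2
    have e3 : eta π c (j, l) = b := by
      have h : (j, l) = iter π b q₂ := by
        rw [Prod.ext_iff]
        exact ⟨hj', hl⟩
      rw [h]; exact eta_shift π c hq₂ hb1 hb2
    rw [e1, e2, e3]
  · -- nu
    have e1 : nu π c (i, l) = t' := by
      rw [hil, nu_shift π c hQJm1 (by omega), hnuQ]
      omega
    have e2 : nu π c (i, j) = n₁ - a := by
      have h : (i, j) = iter π a q₁ := by
        rw [Prod.ext_iff]
        exact ⟨hi, hj⟩
      rw [h, nu_shift π c hq₁ (by omega)]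
    have e3 : nu π c (j, l) = n₂ - b := by
      have h : (j, l) = iter π b q₂ := by
        rw [Prod.ext_iff]
        exact ⟨hj', hl⟩
      rw [h, nu_shift π c hq₂ (by omega)]
    rw [e1, e2, e3]

end PaperPurity
end

section
/- With the combinatorial setup below, let (i,j) and (j,l) be pairs in J×J such that one of them belongs to J₀,₀ and the other belongs to J₊,₁ (resp. to J₋,₁). Then (i,l) ∈ J₊,₁ (resp. (i,l) ∈ J₋,₁). -/
namespace PaperPurity

variable {r : ℕ}

section proofs

variable {r : ℕ}

lemma pow_pow_apply (π : Equiv.Perm (Fin r)) (m n : ℕ) (x : Fin r) :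
    (π ^ m) ((π ^ n) x) = (π ^ (m + n)) x := by
  rw [← Equiv.Perm.mul_apply, ← pow_add]

lemma not_mem_union_iff (c : ℕ) (q : Fin r × Fin r) :
    q ∉ Jp c ∪ Jm c ↔ q ∈ Jz c := by
  simp only [Jp, Jm, Jz, Set.mem_union, Set.mem_setOf_eq]
  omega

lemma nu_eq_of (π : Equiv.Perm (Fin r)) (c : ℕ) {q : Fin r × Fin r} {ν : ℕ} (hν : 0 < ν)
    (hmid : ∀ t, 0 < t → t < ν → iter π t q ∈ Jz c)
    (hend : iter π ν q ∈ Jp c ∪ Jm c) : nu π c q = ν := by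
  have hmem : ν ∈ {ν : ℕ | 0 < ν ∧ iter π ν q ∈ Jp c ∪ Jm c} := ⟨hν, hend⟩
  have h1 : nu π c q ≤ ν := Nat.sInf_le hmem
  have h2 : nu π c q ∈ {ν : ℕ | 0 < ν ∧ iter π ν q ∈ Jp c ∪ Jm c} :=
    Nat.sInf_mem ⟨ν, hmem⟩
  rcases lt_or_eq_of_le h1 with h | h
  · exact absurd h2.2 ((not_mem_union_iff c _).mpr (hmid _ h2.1 h))
  · exact h

lemma mem_Jm1_of (π : Equiv.Perm (Fin r)) (c : ℕ) {q : Fin r × Fin r} {ν : ℕ}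
    (hq : q ∈ Jm c) (hν : 0 < ν)
    (hmid : ∀ t, 0 < t → t < ν → iter π t q ∈ Jz c)
    (hend : iter π ν q ∈ Jp c) : q ∈ Jm1 π c ∧ nu π c q = ν := by
  have h := nu_eq_of π c hν hmid (Or.inl hend)
  exact ⟨⟨hq, by rw [h]; exact hend⟩, h⟩

lemma Jm1_elim (π : Equiv.Perm (Fin r)) (c : ℕ) {q : Fin r × Fin r} (h : q ∈ Jm1 π c) :
    q ∈ Jm c ∧ 0 < nu π c q ∧ (∀ t, 0 < t → t < nu π c q → iter π t q ∈ Jz c) ∧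
      iter π (nu π c q) q ∈ Jp c := by
  obtain ⟨hq, hend⟩ := h
  have hne : ∃ ν, ν ∈ {ν : ℕ | 0 < ν ∧ iter π ν q ∈ Jp c ∪ Jm c} := by
    refine ⟨orderOf π, orderOf_pos π, ?_⟩
    have h1 : iter π (orderOf π) q = q := by
      simp [iter, pow_orderOf_eq_one]
    rw [h1]; exact Or.inr hq
  have hmem := Nat.sInf_mem hne
  refine ⟨hq, hmem.1, ?_, hend⟩
  intro t ht htν
  by_contra hcon
  have h2 : iter π t q ∈ Jp c ∪ Jm c := by
    by_contra h3; exact hcon ((not_mem_union_iff c _).mp h3)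
  have h4 : nu π c q ≤ t :=
    Nat.sInf_le (show t ∈ {ν : ℕ | 0 < ν ∧ iter π ν q ∈ Jp c ∪ Jm c} from ⟨ht, h2⟩)
  omega

lemma Jz0_elim (π : Equiv.Perm (Fin r)) (c : ℕ) {q' : Fin r × Fin r} (h : q' ∈ Jz0 π c) :
    ∃ q s, q ∈ Jm c ∧ 0 < s ∧ s < nu π c q ∧
      (∀ t, 0 < t → t < nu π c q → iter π t q ∈ Jz c) ∧
      iter π (nu π c q) q ∈ Jp c ∧ q' = iter π s q := by
  obtain ⟨q, hq, s, hs1, hs2, hq'⟩ := h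
  obtain ⟨h1, h2, h3, h4⟩ := Jm1_elim π c hq
  exact ⟨q, s, h1, hs1, by omega, h3, h4, hq'⟩

lemma glue (π : Equiv.Perm (Fin r)) (c : ℕ)
    {a b a' b' : Fin r} {ν₁ ν₂ σ τ : ℕ}
    (hab : (a, b) ∈ Jm c) (hν₁ : 0 < ν₁) (hν₂ : 0 < ν₂)
    (hmid1 : ∀ t, 0 < t → t < ν₁ → iter π t (a, b) ∈ Jz c)
    (hend1 : iter π ν₁ (a, b) ∈ Jp c)
    (hab' : (a', b') ∈ Jm c)
    (hmid2 : ∀ t, 0 < t → t < ν₂ → iter π t (a', b') ∈ Jz c)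
    (hend2 : iter π ν₂ (a', b') ∈ Jp c)
    (hmatch : (π ^ σ) b = (π ^ τ) a')
    (hστ : σ < ν₁ + τ) (hτσ : τ < ν₂ + σ) :
    ((π ^ (σ - min σ τ)) a, (π ^ (τ - min σ τ)) b') ∈ Jm1 π c ∧
    nu π c ((π ^ (σ - min σ τ)) a, (π ^ (τ - min σ τ)) b')
      = min (ν₁ + τ) (ν₂ + σ) - max σ τ ∧
    iter π (min (ν₁ + τ) (ν₂ + σ) - max σ τ)
        ((π ^ (σ - min σ τ)) a, (π ^ (τ - min σ τ)) b')
      = ((π ^ (min (ν₁ + τ) (ν₂ + σ) - τ)) a, (π ^ (min (ν₁ + τ) (ν₂ + σ) - σ)) b') := by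
  have hshift : ∀ x y : ℕ, x + τ = y + σ → (π ^ x) b = (π ^ y) a' := by
    intro x y hxy
    apply (π ^ τ).injective
    rw [pow_pow_apply, pow_pow_apply, show τ + x = y + σ from by omega,
      ← pow_pow_apply, hmatch, pow_pow_apply, Nat.add_comm]
  simp only [iter, Jm, Jp, Jz, Set.mem_setOf_eq] at hab hab' hend1 hend2 hmid1 hmid2
  set m := min σ τ with hm
  set M := min (ν₁ + τ) (ν₂ + σ) with hM
  set L := M - max σ τ with hL
  have hLpos : 0 < L := by omega
  -- exponent identities
  have hLa : L + (σ - m) = M - τ := by omega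
  have hLb : L + (τ - m) = M - σ := by omega
  -- base pair in Jm
  have hbase : ((π ^ (σ - m)) a, (π ^ (τ - m)) b') ∈ Jm c := by
    simp only [Jm, Set.mem_setOf_eq]
    constructor
    · rcases Nat.eq_zero_or_pos (σ - m) with h0 | hpos
      · rw [h0]; simpa using hab.1
      · have hz := hmid1 _ hpos (by omega)
        have he : (π ^ (σ - m)) b = (π ^ 0) a' := hshift _ _ (by omega)
        rw [he] at hz
        simp only [pow_zero, Equiv.Perm.coe_one, id_eq] at hz
        omega
    · rcases Nat.eq_zero_or_pos (τ - m) with h0 | hpos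
      · rw [h0]; simpa using hab'.2
      · have hz := hmid2 _ hpos (by omega)
        have he : (π ^ 0) b = (π ^ (τ - m)) a' := hshift _ _ (by omega)
        rw [← he] at hz
        simp only [pow_zero, Equiv.Perm.coe_one, id_eq] at hz
        omega
  -- intermediate times in Jz
  have hmidn : ∀ t, 0 < t → t < L → iter π t ((π ^ (σ - m)) a, (π ^ (τ - m)) b') ∈ Jz c := by
    intro t ht htL
    simp only [iter, Jz, Set.mem_setOf_eq, pow_pow_apply]
    have hz1 := hmid1 (t + (σ - m)) (by omega) (by omega)
    have hz2 := hmid2 (t + (τ - m)) (by omega) (by omega)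
    have he : (π ^ (t + (σ - m))) b = (π ^ (t + (τ - m))) a' := hshift _ _ (by omega)
    rw [he] at hz1
    omega
  -- endpoint in Jp
  have hendn : iter π L ((π ^ (σ - m)) a, (π ^ (τ - m)) b') ∈ Jp c := by
    simp only [iter, Jp, Set.mem_setOf_eq, pow_pow_apply, hLa, hLb]
    rcases le_total (ν₁ + τ) (ν₂ + σ) with hc1 | hc1
    · have hMe : M = ν₁ + τ := by omega
      have h1 : (c : ℕ) ≤ ((π ^ (M - τ)) a).val := by
        rw [show M - τ = ν₁ from by omega]; exact hend1.2
      rcases eq_or_lt_of_le (show M - σ ≤ ν₂ from by omega) with h2 | h2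
      · refine ⟨?_, h1⟩; rw [h2]; exact hend2.1
      · have hz := hmid2 (M - σ) (by omega) h2
        have he : (π ^ ν₁) b = (π ^ (M - σ)) a' := hshift _ _ (by omega)
        rw [he] at hend1
        exact ⟨by omega, h1⟩
    · have hMe : M = ν₂ + σ := by omega
      have h1 : ((π ^ (M - σ)) b').val < c := by
        rw [show M - σ = ν₂ from by omega]; exact hend2.1
      rcases eq_or_lt_of_le (show M - τ ≤ ν₁ from by omega) with h2 | h2
      · refine ⟨h1, ?_⟩; rw [h2]; exact hend1.2
      · have hz := hmid1 (M - τ) (by omega) h2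
        have he : (π ^ (M - τ)) b = (π ^ ν₂) a' := hshift _ _ (by omega)
        rw [he] at hz
        exact ⟨h1, by omega⟩
  obtain ⟨h1, h2⟩ := mem_Jm1_of π c hbase hLpos hmidn hendn
  refine ⟨h1, h2, ?_⟩
  simp only [iter, pow_pow_apply, hLa, hLb]

lemma case1 {π : Equiv.Perm (Fin r)} {c : ℕ} {i j l : Fin r}
    (h1 : (i, j) ∈ Jz0 π c) (h2 : (j, l) ∈ Jp1 π c) : (i, l) ∈ Jp1 π c := by
  obtain ⟨⟨a, b⟩, s, habm, hs, hsν, hmid1, hend1, hij⟩ := Jz0_elim π c h1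
  obtain ⟨⟨a', b'⟩, hq', hjl⟩ := h2
  obtain ⟨hab'm, hν₂, hmid2, hend2⟩ := Jm1_elim π c hq'
  simp only [iter, Prod.mk.injEq] at hij hjl
  have hmatch : (π ^ s) b = (π ^ nu π c (a', b')) a' := by rw [← hij.2, ← hjl.1]
  obtain ⟨hmem, hnu, hiter⟩ :=
    glue π c habm (by omega) hν₂ hmid1 hend1 hab'm hmid2 hend2 hmatch (by omega) (by omega)
  refine ⟨_, hmem, ?_⟩
  rw [hnu, hiter,
    show min (nu π c (a, b) + nu π c (a', b')) (nu π c (a', b') + s) - nu π c (a', b') = s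
      from by omega,
    show min (nu π c (a, b) + nu π c (a', b')) (nu π c (a', b') + s) - s = nu π c (a', b')
      from by omega]
  rw [hij.1, hjl.2]

lemma case2 {π : Equiv.Perm (Fin r)} {c : ℕ} {i j l : Fin r}
    (h1 : (i, j) ∈ Jp1 π c) (h2 : (j, l) ∈ Jz0 π c) : (i, l) ∈ Jp1 π c := by
  obtain ⟨⟨a, b⟩, hq, hij⟩ := h1
  obtain ⟨habm, hν₁, hmid1, hend1⟩ := Jm1_elim π c hq
  obtain ⟨⟨a', b'⟩, s, hab'm, hs, hsν, hmid2, hend2, hjl⟩ := Jz0_elim π c h2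
  simp only [iter, Prod.mk.injEq] at hij hjl
  have hmatch : (π ^ nu π c (a, b)) b = (π ^ s) a' := by rw [← hij.2, ← hjl.1]
  obtain ⟨hmem, hnu, hiter⟩ :=
    glue π c habm hν₁ (by omega) hmid1 hend1 hab'm hmid2 hend2 hmatch (by omega) (by omega)
  refine ⟨_, hmem, ?_⟩
  rw [hnu, hiter,
    show min (nu π c (a, b) + s) (nu π c (a', b') + nu π c (a, b)) - s = nu π c (a, b)
      from by omega,
    show min (nu π c (a, b) + s) (nu π c (a', b') + nu π c (a, b)) - nu π c (a, b) = s
      from by omega]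
  rw [hij.1, hjl.2]

lemma case3 {π : Equiv.Perm (Fin r)} {c : ℕ} {i j l : Fin r}
    (h1 : (i, j) ∈ Jz0 π c) (h2 : (j, l) ∈ Jm1 π c) : (i, l) ∈ Jm1 π c := by
  obtain ⟨⟨a, b⟩, s, habm, hs, hsν, hmid1, hend1, hij⟩ := Jz0_elim π c h1
  obtain ⟨hjlm, hν₂, hmid2, hend2⟩ := Jm1_elim π c h2
  simp only [iter, Prod.mk.injEq] at hij
  have hmatch : (π ^ s) b = (π ^ 0) j := by simpa using hij.2.symm
  obtain ⟨hmem, hnu, hiter⟩ :=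
    glue π c habm (by omega) hν₂ hmid1 hend1 hjlm hmid2 hend2 hmatch (by omega) (by omega)
  have e1 : (π ^ (s - min s 0)) a = i := by
    rw [show s - min s 0 = s from by omega]; exact hij.1.symm
  have e2 : (π ^ (0 - min s 0)) l = l := by
    rw [show (0 : ℕ) - min s 0 = 0 from by omega]; simp
  rw [e1, e2] at hmem
  exact hmem

lemma case4 {π : Equiv.Perm (Fin r)} {c : ℕ} {i j l : Fin r}
    (h1 : (i, j) ∈ Jm1 π c) (h2 : (j, l) ∈ Jz0 π c) : (i, l) ∈ Jm1 π c := by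
  obtain ⟨hijm, hν₁, hmid1, hend1⟩ := Jm1_elim π c h1
  obtain ⟨⟨a', b'⟩, s, hab'm, hs, hsν, hmid2, hend2, hjl⟩ := Jz0_elim π c h2
  simp only [iter, Prod.mk.injEq] at hjl
  have hmatch : (π ^ 0) j = (π ^ s) a' := by simpa using hjl.1
  obtain ⟨hmem, hnu, hiter⟩ :=
    glue π c hijm hν₁ (by omega) hmid1 hend1 hab'm hmid2 hend2 hmatch (by omega) (by omega)
  have e1 : (π ^ (0 - min 0 s)) i = i := by
    rw [show (0 : ℕ) - min 0 s = 0 from by omega]; simp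
  have e2 : (π ^ (s - min 0 s)) b' = l := by
    rw [show s - min 0 s = s from by omega]; exact hjl.2.symm
  rw [e1, e2] at hmem
  exact hmem

end proofs


theorem statement_2 (c d : ℕ) (hc : 0 < c) (hd : 0 < d)
    (π : Equiv.Perm (Fin (c + d))) (i j l : Fin (c + d)) :
    ((((i, j) ∈ Jz0 π c ∧ (j, l) ∈ Jp1 π c) ∨ ((i, j) ∈ Jp1 π c ∧ (j, l) ∈ Jz0 π c)) →
        (i, l) ∈ Jp1 π c) ∧
    ((((i, j) ∈ Jz0 π c ∧ (j, l) ∈ Jm1 π c) ∨ ((i, j) ∈ Jm1 π c ∧ (j, l) ∈ Jz0 π c)) →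
        (i, l) ∈ Jm1 π c) := by
  refine ⟨?_, ?_⟩
  · rintro (⟨h1, h2⟩ | ⟨h1, h2⟩)
    · exact case1 h1 h2
    · exact case2 h1 h2
  · rintro (⟨h1, h2⟩ | ⟨h1, h2⟩)
    · exact case3 h1 h2
    · exact case4 h1 h2


end PaperPurity
end

section
/- With the combinatorial and matrix setup below, each of the four subspaces n₊ + n₀,₀, n₊,₁ + n₀,₀, n₀,₀ + n₋, and n₀,₀ + n₋,₁ of M_r(k) is closed under multiplication and is nilpotent: for each of them there exists a positive integer N such that its N-th power (as a subspace product) is zero. -/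
namespace PaperPurity

variable {r : ℕ}

section Basic

variable (π : Equiv.Perm (Fin r)) (c : ℕ)

@[simp] lemma iter_fst (s : ℕ) (q : Fin r × Fin r) : (iter π s q).1 = (π ^ s) q.1 := rfl
@[simp] lemma iter_snd (s : ℕ) (q : Fin r × Fin r) : (iter π s q).2 = (π ^ s) q.2 := rfl

lemma pow_apply_add (s t : ℕ) (x : Fin r) : (π ^ (s + t)) x = (π ^ s) ((π ^ t) x) := by
  rw [pow_add]; rfl

lemma not_mem_JpJm_iff (q : Fin r × Fin r) :
    q ∉ Jp c ∪ Jm c ↔ (q.1.val < c ↔ q.2.val < c) := by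
  simp only [Set.mem_union, Jp, Jm, Set.mem_setOf_eq, not_or]
  omega

lemma Jm1_nu_pos {q : Fin r × Fin r} (h : q ∈ Jm1 π c) : 0 < nu π c q := by
  rcases Nat.eq_zero_or_pos (nu π c q) with h' | h'
  case inr => exact h'
  · exfalso
    have h2 := h.2
    rw [h', iter_zero] at h2
    have h1 := h.1
    simp only [Jm, Set.mem_setOf_eq] at h1
    simp only [Jp, Set.mem_setOf_eq] at h2
    omega

lemma Jm1_mid {q : Fin r × Fin r} (_h : q ∈ Jm1 π c) {u : ℕ} (h0 : 0 < u)
    (hu : u < nu π c q) :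
    (((π ^ u) q.1).val < c ↔ ((π ^ u) q.2).val < c) := by
  have h' : u ∉ {ν : ℕ | 0 < ν ∧ iter π ν q ∈ Jp c ∪ Jm c} := Nat.notMem_of_lt_sInf hu
  simp only [Set.mem_setOf_eq, not_and] at h'
  exact (not_mem_JpJm_iff c _).1 (h' h0)

lemma nu_eq_s5 (q : Fin r × Fin r) (N : ℕ) (hN : 0 < N) (hland : iter π N q ∈ Jp c ∪ Jm c)
    (hmid : ∀ u, 0 < u → u < N → (((π ^ u) q.1).val < c ↔ ((π ^ u) q.2).val < c)) :
    nu π c q = N := by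
  refine le_antisymm (Nat.sInf_le ⟨hN, hland⟩) (le_csInf ⟨N, hN, hland⟩ ?_)
  rintro m ⟨hm, hmem⟩
  by_contra hlt
  push_neg at hlt
  exact (not_mem_JpJm_iff c _).2 (hmid m hm hlt) hmem

lemma mem_Jm1_of_s5 (q : Fin r × Fin r) (N : ℕ) (hN : 0 < N) (hm : q ∈ Jm c)
    (hland : iter π N q ∈ Jp c)
    (hmid : ∀ u, 0 < u → u < N → (((π ^ u) q.1).val < c ↔ ((π ^ u) q.2).val < c)) :
    q ∈ Jm1 π c ∧ nu π c q = N := by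
  have h := nu_eq_s5 π c q N hN (Or.inl hland) hmid
  exact ⟨⟨hm, h ▸ hland⟩, h⟩

end Basic


section Master

variable (π : Equiv.Perm (Fin r)) (c : ℕ)

lemma master {q q' : Fin r × Fin r} (hq : q ∈ Jm1 π c) (hq' : q' ∈ Jm1 π c)
    {ν₁ ν₂ : ℕ} (e1 : nu π c q = ν₁) (e2 : nu π c q' = ν₂)
    {s t : ℕ} (hs : s ≤ ν₁) (ht : t ≤ ν₂)
    (heq : (π ^ s) q.2 = (π ^ t) q'.1)
    (h1 : s = 0 → t < ν₂) (h2 : t = 0 → s < ν₁) :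
    s ≠ t ∧ ν₁ - s ≠ ν₂ - t ∧
      ∃ q'' ∈ Jm1 π c,
        nu π c q'' = min s t + min (ν₁ - s) (ν₂ - t) ∧
        ((π ^ s) q.1, (π ^ t) q'.2) = iter π (min s t) q'' := by
  have hν₁pos : 0 < ν₁ := e1 ▸ Jm1_nu_pos π c hq
  have hν₂pos : 0 < ν₂ := e2 ▸ Jm1_nu_pos π c hq'
  have hqm := hq.1
  have hq'm := hq'.1
  simp only [Jm, Set.mem_setOf_eq] at hqm hq'm
  have hqp := hq.2
  have hq'p := hq'.2
  rw [e1] at hqp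
  rw [e2] at hq'p
  simp only [Jp, Set.mem_setOf_eq, iter_fst, iter_snd] at hqp hq'p
  have midq : ∀ u, 0 < u → u < ν₁ → (((π ^ u) q.1).val < c ↔ ((π ^ u) q.2).val < c) :=
    fun u h0 hu => Jm1_mid π c hq h0 (by rw [e1]; exact hu)
  have midq' : ∀ u, 0 < u → u < ν₂ → (((π ^ u) q'.1).val < c ↔ ((π ^ u) q'.2).val < c) :=
    fun u h0 hu => Jm1_mid π c hq' h0 (by rw [e2]; exact hu)
  have sne : s ≠ t := by
    intro h
    subst h
    have := (π ^ s).injective heq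
    rw [this] at hqm
    omega
  have nne : ν₁ - s ≠ ν₂ - t := by
    intro h
    have eq1 : (π ^ ν₁) q.2 = (π ^ ν₂) q'.1 := by
      have e3 : ν₁ = (ν₁ - s) + s := by omega
      have e4 : ν₂ = (ν₁ - s) + t := by omega
      rw [e3, pow_apply_add, heq, ← pow_apply_add, ← e4]
    rw [eq1] at hqp
    omega
  refine ⟨sne, nne, ?_⟩
  rcases Nat.lt_trichotomy s t with hlt | hst | hgt
  · -- case s < t
    have he1 : 1 ≤ t - s := by omega
    have he2 : t - s < ν₂ := by
      rcases Nat.eq_zero_or_pos s with h0 | h0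
      · have := h1 h0; omega
      · omega
    have key : (π ^ (t - s)) q'.1 = q.2 := by
      apply (π ^ s).injective
      rw [← pow_apply_add, show s + (t - s) = t from by omega, ← heq]
    have link : ∀ w, (π ^ ((t - s) + w)) q'.1 = (π ^ w) q.2 := by
      intro w
      rw [add_comm, pow_apply_add, key]
    have hN0 : 0 < s + min (ν₁ - s) (ν₂ - t) := by
      rcases Nat.eq_zero_or_pos s with h0 | h0
      · have := h1 h0; omega
      · omega
    have hsnd : ∀ u : ℕ, (π ^ u) ((π ^ (t - s)) q'.2) = (π ^ ((t - s) + u)) q'.2 := by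
      intro u
      rw [add_comm, pow_apply_add]
    have hm'' : ((q.1, (π ^ (t - s)) q'.2) : Fin r × Fin r) ∈ Jm c := by
      have hBe : ¬ ((π ^ (t - s)) q'.2).val < c := by
        intro hcon
        have hAe : ((π ^ (t - s)) q'.1).val < c := (midq' (t - s) he1 he2).2 hcon
        rw [key] at hAe
        omega
      refine ⟨hqm.1, ?_⟩
      show c ≤ ((π ^ (t - s)) q'.2).val
      omega
    have hmid : ∀ u, 0 < u → u < s + min (ν₁ - s) (ν₂ - t) →
        (((π ^ u) ((q.1, (π ^ (t - s)) q'.2) : Fin r × Fin r).1).val < c ↔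
          ((π ^ u) ((q.1, (π ^ (t - s)) q'.2) : Fin r × Fin r).2).val < c) := by
      intro u h0 hu
      have c1 : (((π ^ u) q.1).val < c ↔ ((π ^ u) q.2).val < c) := midq u h0 (by omega)
      have c2 : (((π ^ ((t - s) + u)) q'.1).val < c ↔ ((π ^ ((t - s) + u)) q'.2).val < c) :=
        midq' ((t - s) + u) (by omega) (by omega)
      rw [link u] at c2
      simp only [hsnd u]
      exact c1.trans c2
    have hland : iter π (s + min (ν₁ - s) (ν₂ - t)) ((q.1, (π ^ (t - s)) q'.2)) ∈ Jp c := by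
      refine ⟨?_, ?_⟩ <;> simp only [iter_fst, iter_snd, hsnd]
      · -- second component < c
        rcases lt_or_gt_of_ne nne with hmin | hmin
        · have c2 : (((π ^ ((t - s) + (s + min (ν₁ - s) (ν₂ - t)))) q'.1).val < c ↔
              ((π ^ ((t - s) + (s + min (ν₁ - s) (ν₂ - t)))) q'.2).val < c) :=
            midq' _ (by omega) (by omega)
          rw [link] at c2
          refine c2.1 ?_
          rw [show s + min (ν₁ - s) (ν₂ - t) = ν₁ from by omega]
          exact hqp.1
        · rw [show (t - s) + (s + min (ν₁ - s) (ν₂ - t)) = ν₂ from by omega]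
          exact hq'p.1
      · -- first component ≥ c
        rcases lt_or_gt_of_ne nne with hmin | hmin
        · rw [show s + min (ν₁ - s) (ν₂ - t) = ν₁ from by omega]
          exact hqp.2
        · have c1 := midq (s + min (ν₁ - s) (ν₂ - t)) hN0 (by omega)
          have c2 := link (s + min (ν₁ - s) (ν₂ - t))
          have h3 : c ≤ ((π ^ ((t - s) + (s + min (ν₁ - s) (ν₂ - t)))) q'.1).val := by
            rw [show (t - s) + (s + min (ν₁ - s) (ν₂ - t)) = ν₂ from by omega]
            exact hq'p.2
          rw [c2] at h3
          by_contra hcon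
          push_neg at hcon
          have := c1.1 hcon
          omega
    obtain ⟨hmem'', hnu''⟩ :=
      mem_Jm1_of_s5 π c _ (s + min (ν₁ - s) (ν₂ - t)) hN0 hm'' hland hmid
    refine ⟨_, hmem'', by rw [hnu'']; omega, ?_⟩
    rw [min_eq_left (le_of_lt hlt)]
    simp only [iter, hsnd]
    rw [show (t - s) + s = t from by omega]
  · exact absurd hst sne
  · -- case t < s
    have he1 : 1 ≤ s - t := by omega
    have he2 : s - t < ν₁ := by
      rcases Nat.eq_zero_or_pos t with h0 | h0
      · have := h2 h0; omega
      · omega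
    have key : (π ^ (s - t)) q.2 = q'.1 := by
      apply (π ^ t).injective
      rw [← pow_apply_add, show t + (s - t) = s from by omega, heq]
    have link : ∀ w, (π ^ ((s - t) + w)) q.2 = (π ^ w) q'.1 := by
      intro w
      rw [add_comm, pow_apply_add, key]
    have hN0 : 0 < t + min (ν₁ - s) (ν₂ - t) := by
      rcases Nat.eq_zero_or_pos t with h0 | h0
      · have := h2 h0; omega
      · omega
    have hfst : ∀ u : ℕ, (π ^ u) ((π ^ (s - t)) q.1) = (π ^ ((s - t) + u)) q.1 := by
      intro u
      rw [add_comm, pow_apply_add]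
    have hm'' : (((π ^ (s - t)) q.1, q'.2) : Fin r × Fin r) ∈ Jm c := by
      have hAe : ((π ^ (s - t)) q.1).val < c := by
        refine (midq (s - t) he1 he2).2 ?_
        rw [key]
        exact hq'm.1
      exact ⟨hAe, hq'm.2⟩
    have hmid : ∀ u, 0 < u → u < t + min (ν₁ - s) (ν₂ - t) →
        (((π ^ u) (((π ^ (s - t)) q.1, q'.2) : Fin r × Fin r).1).val < c ↔
          ((π ^ u) (((π ^ (s - t)) q.1, q'.2) : Fin r × Fin r).2).val < c) := by
      intro u h0 hu
      have c1 : (((π ^ ((s - t) + u)) q.1).val < c ↔ ((π ^ ((s - t) + u)) q.2).val < c) :=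
        midq ((s - t) + u) (by omega) (by omega)
      have c2 : (((π ^ u) q'.1).val < c ↔ ((π ^ u) q'.2).val < c) := midq' u h0 (by omega)
      rw [link u] at c1
      simp only [hfst u]
      exact c1.trans c2
    have hland : iter π (t + min (ν₁ - s) (ν₂ - t)) (((π ^ (s - t)) q.1, q'.2)) ∈ Jp c := by
      refine ⟨?_, ?_⟩ <;> simp only [iter_fst, iter_snd, hfst]
      · -- second component < c
        rcases lt_or_gt_of_ne nne with hmin | hmin
        · have c2 : (((π ^ (t + min (ν₁ - s) (ν₂ - t))) q'.1).val < c ↔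
              ((π ^ (t + min (ν₁ - s) (ν₂ - t))) q'.2).val < c) :=
            midq' _ hN0 (by omega)
          refine c2.1 ?_
          rw [← link]
          rw [show (s - t) + (t + min (ν₁ - s) (ν₂ - t)) = ν₁ from by omega]
          exact hqp.1
        · rw [show t + min (ν₁ - s) (ν₂ - t) = ν₂ from by omega]
          exact hq'p.1
      · -- first component ≥ c
        rcases lt_or_gt_of_ne nne with hmin | hmin
        · rw [show (s - t) + (t + min (ν₁ - s) (ν₂ - t)) = ν₁ from by omega]
          exact hqp.2
        · have c1 := midq ((s - t) + (t + min (ν₁ - s) (ν₂ - t))) (by omega) (by omega)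
          have c2 := link (t + min (ν₁ - s) (ν₂ - t))
          have h3 : c ≤ ((π ^ (t + min (ν₁ - s) (ν₂ - t))) q'.1).val := by
            rw [show t + min (ν₁ - s) (ν₂ - t) = ν₂ from by omega]
            exact hq'p.2
          rw [← c2] at h3
          by_contra hcon
          push_neg at hcon
          have := c1.1 hcon
          omega
    obtain ⟨hmem'', hnu''⟩ :=
      mem_Jm1_of_s5 π c _ (t + min (ν₁ - s) (ν₂ - t)) hN0 hm'' hland hmid
    refine ⟨_, hmem'', by rw [hnu'']; omega, ?_⟩
    rw [min_eq_right (le_of_lt hgt)]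
    simp only [iter, hfst]
    rw [show (s - t) + t = s from by omega]

end Master



section Comp

variable (π : Equiv.Perm (Fin r)) (c : ℕ)

lemma Jp1_subset_Jp : Jp1 π c ⊆ Jp c := by
  rintro p ⟨q, hq, rfl⟩
  exact hq.2

lemma Jm1_subset_Jm : Jm1 π c ⊆ Jm c := fun p hp => hp.1

lemma Jz0_side {p : Fin r × Fin r} (h : p ∈ Jz0 π c) : (p.1.val < c ↔ p.2.val < c) := by
  obtain ⟨q, hq, s, hs1, hs2, rfl⟩ := h
  have hν := Jm1_nu_pos π c hq
  exact Jm1_mid π c hq (by omega) (by omega)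

lemma Jz0_irrefl (x : Fin r) : (x, x) ∉ Jz0 π c := by
  rintro ⟨q, hq, s, hs1, hs2, h⟩
  have h1 : (π ^ s) q.1 = x := (congrArg Prod.fst h).symm
  have h2 : (π ^ s) q.2 = x := (congrArg Prod.snd h).symm
  have : q.1 = q.2 := (π ^ s).injective (h1.trans h2.symm)
  have hm := hq.1
  simp only [Jm, Set.mem_setOf_eq] at hm
  rw [this] at hm
  omega

lemma comp_Jz0_Jz0 {p1 p2 : Fin r × Fin r} (h1 : p1 ∈ Jz0 π c) (h2 : p2 ∈ Jz0 π c)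
    (hm : p1.2 = p2.1) : (p1.1, p2.2) ∈ Jz0 π c := by
  obtain ⟨q, hq, s, hs1, hs2, rfl⟩ := h1
  obtain ⟨q', hq', t, ht1, ht2, rfl⟩ := h2
  have hν₁ := Jm1_nu_pos π c hq
  have hν₂ := Jm1_nu_pos π c hq'
  simp only [iter_fst, iter_snd] at hm
  obtain ⟨sne, nne, q'', hq'', hnu, hiter⟩ :=
    master π c hq hq' rfl rfl (by omega) (by omega) hm
      (fun h0 => absurd h0 (by omega)) (fun h0 => absurd h0 (by omega))
  exact ⟨q'', hq'', min s t, by omega, by omega, hiter⟩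

lemma comp_Jz0_Jm1 {p1 p2 : Fin r × Fin r} (h1 : p1 ∈ Jz0 π c) (h2 : p2 ∈ Jm1 π c)
    (hm : p1.2 = p2.1) : (p1.1, p2.2) ∈ Jm1 π c := by
  obtain ⟨q, hq, s, hs1, hs2, rfl⟩ := h1
  have hν₁ := Jm1_nu_pos π c hq
  have hν₂ := Jm1_nu_pos π c h2
  simp only [iter_snd] at hm
  have heq : (π ^ s) q.2 = (π ^ 0) p2.1 := by simpa using hm
  obtain ⟨sne, nne, q'', hq'', hnu, hiter⟩ :=
    master π c hq h2 rfl rfl (by omega) (Nat.zero_le _) heq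
      (fun h0 => absurd h0 (by omega)) (fun _ => by omega)
  simp only [Nat.min_zero, iter_zero, pow_zero, Equiv.Perm.coe_one, id_eq] at hiter
  rw [← hiter] at hq''
  exact hq''

lemma comp_Jm1_Jz0 {p1 p2 : Fin r × Fin r} (h1 : p1 ∈ Jm1 π c) (h2 : p2 ∈ Jz0 π c)
    (hm : p1.2 = p2.1) : (p1.1, p2.2) ∈ Jm1 π c := by
  obtain ⟨q', hq', t, ht1, ht2, rfl⟩ := h2
  have hν₁ := Jm1_nu_pos π c h1
  have hν₂ := Jm1_nu_pos π c hq'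
  simp only [iter_fst] at hm
  have heq : (π ^ 0) p1.2 = (π ^ t) q'.1 := by simpa using hm
  obtain ⟨sne, nne, q'', hq'', hnu, hiter⟩ :=
    master π c h1 hq' rfl rfl (Nat.zero_le _) (by omega) heq
      (fun _ => by omega) (fun h0 => absurd h0 (by omega))
  simp only [Nat.zero_min, iter_zero, pow_zero, Equiv.Perm.coe_one, id_eq] at hiter
  rw [← hiter] at hq''
  exact hq''

lemma comp_Jp1_Jz0 {p1 p2 : Fin r × Fin r} (h1 : p1 ∈ Jp1 π c) (h2 : p2 ∈ Jz0 π c)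
    (hm : p1.2 = p2.1) : (p1.1, p2.2) ∈ Jp1 π c := by
  obtain ⟨q, hq, rfl⟩ := h1
  obtain ⟨q', hq', t, ht1, ht2, rfl⟩ := h2
  have hν₁ := Jm1_nu_pos π c hq
  have hν₂ := Jm1_nu_pos π c hq'
  simp only [iter_fst, iter_snd] at hm
  obtain ⟨sne, nne, q'', hq'', hnu, hiter⟩ :=
    master π c hq hq' rfl rfl le_rfl (by omega) hm
      (fun h0 => absurd h0 (by omega)) (fun h0 => absurd h0 (by omega))
  have hx : nu π c q'' = min (nu π c q) t := by omega
  refine ⟨q'', hq'', ?_⟩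
  rw [hx]
  exact hiter

lemma comp_Jz0_Jp1 {p1 p2 : Fin r × Fin r} (h1 : p1 ∈ Jz0 π c) (h2 : p2 ∈ Jp1 π c)
    (hm : p1.2 = p2.1) : (p1.1, p2.2) ∈ Jp1 π c := by
  obtain ⟨q, hq, s, hs1, hs2, rfl⟩ := h1
  obtain ⟨q', hq', rfl⟩ := h2
  have hν₁ := Jm1_nu_pos π c hq
  have hν₂ := Jm1_nu_pos π c hq'
  simp only [iter_fst, iter_snd] at hm
  obtain ⟨sne, nne, q'', hq'', hnu, hiter⟩ :=
    master π c hq hq' rfl rfl (by omega) le_rfl hm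
      (fun h0 => absurd h0 (by omega)) (fun h0 => absurd h0 (by omega))
  have hx : nu π c q'' = min s (nu π c q') := by omega
  refine ⟨q'', hq'', ?_⟩
  rw [hx]
  exact hiter

lemma trans1 : ∀ p1 ∈ Jp c ∪ Jz0 π c, ∀ p2 ∈ Jp c ∪ Jz0 π c, p1.2 = p2.1 →
    (p1.1, p2.2) ∈ Jp c ∪ Jz0 π c := by
  rintro p1 (hp1 | hp1) p2 (hp2 | hp2) hm
  · have hv := congrArg Fin.val hm
    have ha := hp1.1
    have hb := hp2.2
    omega
  · have hv := congrArg Fin.val hm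
    have hside := Jz0_side π c hp2
    have ha : p1.2.val < c := hp1.1
    exact Or.inl ⟨hside.1 (by omega : p2.1.val < c), hp1.2⟩
  · have hv := congrArg Fin.val hm
    have hside := Jz0_side π c hp1
    refine Or.inl ⟨hp2.1, ?_⟩
    have hb : c ≤ p2.1.val := hp2.2
    have : ¬ p1.1.val < c := fun hcon => by
      have := hside.1 hcon
      omega
    show c ≤ p1.1.val
    omega
  · exact Or.inr (comp_Jz0_Jz0 π c hp1 hp2 hm)

lemma trans2 : ∀ p1 ∈ Jp1 π c ∪ Jz0 π c, ∀ p2 ∈ Jp1 π c ∪ Jz0 π c, p1.2 = p2.1 →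
    (p1.1, p2.2) ∈ Jp1 π c ∪ Jz0 π c := by
  rintro p1 (hp1 | hp1) p2 (hp2 | hp2) hm
  · have hv := congrArg Fin.val hm
    have ha := (Jp1_subset_Jp π c hp1).1
    have hb := (Jp1_subset_Jp π c hp2).2
    omega
  · exact Or.inl (comp_Jp1_Jz0 π c hp1 hp2 hm)
  · exact Or.inl (comp_Jz0_Jp1 π c hp1 hp2 hm)
  · exact Or.inr (comp_Jz0_Jz0 π c hp1 hp2 hm)

lemma trans3 : ∀ p1 ∈ Jz0 π c ∪ Jm c, ∀ p2 ∈ Jz0 π c ∪ Jm c, p1.2 = p2.1 →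
    (p1.1, p2.2) ∈ Jz0 π c ∪ Jm c := by
  rintro p1 (hp1 | hp1) p2 (hp2 | hp2) hm
  · exact Or.inl (comp_Jz0_Jz0 π c hp1 hp2 hm)
  · have hv := congrArg Fin.val hm
    have hside := Jz0_side π c hp1
    have ha : p2.1.val < c := hp2.1
    exact Or.inr ⟨hside.2 (by omega : p1.2.val < c), hp2.2⟩
  · have hv := congrArg Fin.val hm
    have hside := Jz0_side π c hp2
    refine Or.inr ⟨hp1.1, ?_⟩
    have hb : c ≤ p1.2.val := hp1.2
    have : ¬ p2.2.val < c := fun hcon => by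
      have := hside.2 hcon
      omega
    show c ≤ p2.2.val
    omega
  · have hv := congrArg Fin.val hm
    have ha := hp1.2
    have hb := hp2.1
    omega

lemma trans4 : ∀ p1 ∈ Jz0 π c ∪ Jm1 π c, ∀ p2 ∈ Jz0 π c ∪ Jm1 π c, p1.2 = p2.1 →
    (p1.1, p2.2) ∈ Jz0 π c ∪ Jm1 π c := by
  rintro p1 (hp1 | hp1) p2 (hp2 | hp2) hm
  · exact Or.inl (comp_Jz0_Jz0 π c hp1 hp2 hm)
  · exact Or.inr (comp_Jz0_Jm1 π c hp1 hp2 hm)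
  · exact Or.inr (comp_Jm1_Jz0 π c hp1 hp2 hm)
  · have hv := congrArg Fin.val hm
    have ha := (Jm1_subset_Jm π c hp1).2
    have hb := (Jm1_subset_Jm π c hp2).1
    omega

lemma irr1 : ∀ x : Fin r, (x, x) ∉ Jp c ∪ Jz0 π c := by
  rintro x (h | h)
  · have h1 : x.val < c := h.1
    have h2 : c ≤ x.val := h.2
    omega
  · exact Jz0_irrefl π c x h

lemma irr2 : ∀ x : Fin r, (x, x) ∉ Jp1 π c ∪ Jz0 π c := by
  rintro x (h | h)
  · have h' := Jp1_subset_Jp π c h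
    have h1 : x.val < c := h'.1
    have h2 : c ≤ x.val := h'.2
    omega
  · exact Jz0_irrefl π c x h

lemma irr3 : ∀ x : Fin r, (x, x) ∉ Jz0 π c ∪ Jm c := by
  rintro x (h | h)
  · exact Jz0_irrefl π c x h
  · have h1 : x.val < c := h.1
    have h2 : c ≤ x.val := h.2
    omega

lemma irr4 : ∀ x : Fin r, (x, x) ∉ Jz0 π c ∪ Jm1 π c := by
  rintro x (h | h)
  · exact Jz0_irrefl π c x h
  · have h' := Jm1_subset_Jm π c h
    have h1 : x.val < c := h'.1
    have h2 : c ≤ x.val := h'.2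
    omega

end Comp



section Span

variable (k : Type*) [Field k]

lemma spanUnits_sup (S T : Set (Fin r × Fin r)) :
    spanUnits k S ⊔ spanUnits k T = spanUnits k (S ∪ T) := by
  rw [spanUnits, spanUnits, spanUnits, Set.image_union, Submodule.span_union]

lemma spanUnits_mono {S T : Set (Fin r × Fin r)} (h : S ⊆ T) :
    spanUnits k S ≤ spanUnits k T :=
  Submodule.span_mono (Set.image_mono h)

lemma spanUnits_mul_le {S T U : Set (Fin r × Fin r)}
    (h : ∀ p1 ∈ S, ∀ p2 ∈ T, p1.2 = p2.1 → (p1.1, p2.2) ∈ U) :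
    spanUnits k S * spanUnits k T ≤ spanUnits k U := by
  rw [spanUnits, spanUnits, spanUnits, Submodule.span_mul_span]
  refine Submodule.span_le.2 ?_
  rintro x hx
  rw [Set.mem_mul] at hx
  obtain ⟨y, ⟨p1, hp1, rfl⟩, z, ⟨p2, hp2, rfl⟩, rfl⟩ := hx
  dsimp only
  by_cases hm : p1.2 = p2.1
  · rw [← hm, Matrix.single_mul_single_same, one_mul]
    exact Submodule.subset_span ⟨(p1.1, p2.2), h p1 hp1 p2 hp2 hm, rfl⟩
  · rw [Matrix.single_mul_single_of_ne (h := hm)]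
    exact Submodule.zero_mem _

open Classical in
noncomputable def rk (S : Set (Fin r × Fin r)) (j : Fin r) : ℕ :=
  (Finset.univ.filter (fun i => (i, j) ∈ S)).card

open Classical in
lemma rk_lt {S : Set (Fin r × Fin r)}
    (htr : ∀ p1 ∈ S, ∀ p2 ∈ S, p1.2 = p2.1 → (p1.1, p2.2) ∈ S)
    (hirr : ∀ x : Fin r, (x, x) ∉ S) {i j : Fin r} (hij : (i, j) ∈ S) :
    rk S i < rk S j := by
  unfold rk
  apply Finset.card_lt_card
  have hsub : (Finset.univ.filter (fun x => (x, i) ∈ S)) ⊆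
      (Finset.univ.filter (fun x => (x, j) ∈ S)) := by
    intro x hx
    simp only [Finset.mem_filter, Finset.mem_univ, true_and] at hx ⊢
    exact htr (x, i) hx (i, j) hij rfl
  refine (Finset.ssubset_iff_of_subset hsub).2 ⟨i, ?_, ?_⟩
  · simp only [Finset.mem_filter, Finset.mem_univ, true_and]
    exact hij
  · simp only [Finset.mem_filter, Finset.mem_univ, true_and]
    exact hirr i

open Classical in
lemma rk_lt_r {S : Set (Fin r × Fin r)} (hirr : ∀ x : Fin r, (x, x) ∉ S) (j : Fin r) :
    rk S j < r := by
  unfold rk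
  have h1 : (Finset.univ.filter (fun i : Fin r => (i, j) ∈ S)).card < Finset.univ.card :=
    Finset.card_lt_card ((Finset.ssubset_iff_of_subset (Finset.subset_univ _)).2
      ⟨j, Finset.mem_univ j, by
        simp only [Finset.mem_filter, Finset.mem_univ, true_and]
        exact hirr j⟩)
  rw [Finset.card_univ, Fintype.card_fin] at h1
  exact h1

lemma main_aux (hr : 0 < r) (S : Set (Fin r × Fin r))
    (htr : ∀ p1 ∈ S, ∀ p2 ∈ S, p1.2 = p2.1 → (p1.1, p2.2) ∈ S)
    (hirr : ∀ x : Fin r, (x, x) ∉ S) :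
    spanUnits k S * spanUnits k S ≤ spanUnits k S ∧
      ∃ N : ℕ, 0 < N ∧ spanUnits k S ^ N = ⊥ := by
  refine ⟨spanUnits_mul_le k htr, r, hr, ?_⟩
  have key : ∀ n : ℕ,
      spanUnits k S ^ (n + 1) ≤
        spanUnits k {p : Fin r × Fin r | p ∈ S ∧ rk S p.1 + (n + 1) ≤ rk S p.2} := by
    intro n
    induction n with
    | zero =>
      rw [pow_one]
      refine spanUnits_mono k (fun p hp => ⟨hp, ?_⟩)
      have h3 := rk_lt htr hirr (show (p.1, p.2) ∈ S from hp)
      omega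
    | succ n ih =>
      rw [pow_succ]
      calc spanUnits k S ^ (n + 1) * spanUnits k S
          ≤ spanUnits k {p : Fin r × Fin r | p ∈ S ∧ rk S p.1 + (n + 1) ≤ rk S p.2} *
              spanUnits k S := mul_le_mul' ih le_rfl
        _ ≤ spanUnits k {p : Fin r × Fin r | p ∈ S ∧ rk S p.1 + (n + 1 + 1) ≤ rk S p.2} := by
            refine spanUnits_mul_le k (fun p1 h1 p2 h2 hm => ⟨htr p1 h1.1 p2 h2 hm, ?_⟩)
            have h3 := rk_lt htr hirr (show (p2.1, p2.2) ∈ S from h2)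
            have h4 := h1.2
            rw [hm] at h4
            show rk S p1.1 + (n + 1 + 1) ≤ rk S p2.2
            omega
  have h2 := key (r - 1)
  rw [Nat.sub_add_cancel hr] at h2
  have hempty : {p : Fin r × Fin r | p ∈ S ∧ rk S p.1 + r ≤ rk S p.2} = (∅ : Set _) := by
    ext p
    simp only [Set.mem_setOf_eq, Set.mem_empty_iff_false, iff_false, not_and]
    intro _
    have h5 := rk_lt_r hirr p.2
    omega
  rw [hempty] at h2
  have hbot : spanUnits k (∅ : Set (Fin r × Fin r)) = ⊥ := by
    simp [spanUnits]
  rw [hbot] at h2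
  exact le_bot_iff.1 h2

end Span

theorem statement_5 (c d : ℕ) (hc : 0 < c) (hd : 0 < d)
    (π : Equiv.Perm (Fin (c + d))) (k : Type*) [Field k] :
    ∀ A ∈ ({spanUnits k (Jp c : Set (Fin (c + d) × Fin (c + d))) ⊔ spanUnits k (Jz0 π c),
            spanUnits k (Jp1 π c) ⊔ spanUnits k (Jz0 π c),
            spanUnits k (Jz0 π c) ⊔ spanUnits k (Jm c : Set (Fin (c + d) × Fin (c + d))),
            spanUnits k (Jz0 π c) ⊔ spanUnits k (Jm1 π c)} :
        Set (Submodule k (Matrix (Fin (c + d)) (Fin (c + d)) k))),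
      A * A ≤ A ∧ ∃ N : ℕ, 0 < N ∧ A ^ N = ⊥ := by
  intro A hA
  have hr : 0 < c + d := by omega
  simp only [Set.mem_insert_iff, Set.mem_singleton_iff] at hA
  rcases hA with rfl | rfl | rfl | rfl
  · rw [spanUnits_sup]
    exact main_aux k hr _ (trans1 π c) (irr1 π c)
  · rw [spanUnits_sup]
    exact main_aux k hr _ (trans2 π c) (irr2 π c)
  · rw [spanUnits_sup]
    exact main_aux k hr _ (trans3 π c) (irr3 π c)
  · rw [spanUnits_sup]
    exact main_aux k hr _ (trans4 π c) (irr4 π c)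

end PaperPurity
end
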